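/- Let H be a finite connected simple graph with no false twins on exactly 8 vertices, and let B be a biclique of H whose two parts each have exactly 3 vertices (B is isomorphic to K_{3,3}). Then at least 4 bicliques of H distinct from B have nonempty intersection with B; equivalently, the vertex of KB(H) corresponding to B has degree at least 4. -/

import Mathlib

/-!
Let `x`, `y` be the two vertices outside `B = B1 ∪ B2`. The vertices of one side of `B` have the
same neighbours inside `B`, so twin-freeness forces the three of them to have pairwise distinct
adjacency patterns towards `x` and `y`; in particular both `x` and `y` have neighbours on both
sides. According to whether `x ~ y` and whether some vertex of `B` sees both `x` and `y`, one
picks four edges or induced paths of length two, each joining `x` or `y` to `B`, such that any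
two of them together span a triangle, a `K₂ + K₁` or an induced `P₄`. These are not complete
bipartite, so the bicliques containing the four pieces are pairwise distinct; they meet `B`
and differ from it because they contain `x` or `y`.
-/

open SimpleGraph

variable {V : Type}

/-- `B1`, `B2` are the two (nonempty) parts of an induced complete bipartite subgraph:
they are disjoint, each part is independent, and all edges between the parts are present. -/
def IsCBP (H : SimpleGraph V) (B1 B2 : Set V) : Prop :=
  B1.Nonempty ∧ B2.Nonempty ∧ Disjoint B1 B2 ∧
    (∀ a ∈ B1, ∀ b ∈ B1, ¬H.Adj a b) ∧
    (∀ a ∈ B2, ∀ b ∈ B2, ¬H.Adj a b) ∧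
    (∀ a ∈ B1, ∀ b ∈ B2, H.Adj a b)

/-- A set of vertices inducing a complete bipartite subgraph `K_{m,n}`, `m, n ≥ 1`. -/
def IsCompleteBipartiteSet (H : SimpleGraph V) (S : Set V) : Prop :=
  ∃ B1 B2 : Set V, IsCBP H B1 B2 ∧ B1 ∪ B2 = S

/-- A biclique: a maximal set of vertices inducing a complete bipartite subgraph. -/
def IsBiclique (H : SimpleGraph V) (S : Set V) : Prop :=
  IsCompleteBipartiteSet H S ∧
    ∀ T : Set V, IsCompleteBipartiteSet H T → S ⊆ T → S = T

/-- The biclique graph `KB(H)`: the intersection graph of the bicliques of `H`. -/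
def KB (H : SimpleGraph V) : SimpleGraph {S : Set V // IsBiclique H S} :=
  SimpleGraph.fromRel fun A B => (A.1 ∩ B.1).Nonempty

variable {H : SimpleGraph V}

lemma IsCBP.symm {B₁ B₂ : Set V} (h : IsCBP H B₁ B₂) : IsCBP H B₂ B₁ := by
  obtain ⟨h₁, h₂, hd, hi₁, hi₂, hc⟩ := h
  exact ⟨h₂, h₁, hd.symm, hi₂, hi₁, fun a ha b hb => (hc b hb a ha).symm⟩

namespace IsCompleteBipartiteSet

variable {S : Set V} {u v w z : V}

lemma adj_iff_not_adj (hS : IsCompleteBipartiteSet H S) (hu : u ∈ S) (hv : v ∈ S) (hw : w ∈ S)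
    (huv : H.Adj u v) : H.Adj u w ↔ ¬H.Adj v w := by
  obtain ⟨P, Q, ⟨-, -, -, hP, hQ, hPQ⟩, rfl⟩ := hS
  have hPQ' : ∀ a ∈ Q, ∀ b ∈ P, H.Adj a b := fun a ha b hb => (hPQ b hb a ha).symm
  rcases hu with hu | hu <;> rcases hv with hv | hv <;> rcases hw with hw | hw <;>
    grind

lemma not_adj_of_adj_of_adj (hS : IsCompleteBipartiteSet H S) (hu : u ∈ S) (hv : v ∈ S)
    (hw : w ∈ S) (huv : H.Adj u v) (hvw : H.Adj v w) : ¬H.Adj u w :=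
  fun huw => (hS.adj_iff_not_adj hu hv hw huv).1 huw hvw

lemma adj_of_adj_of_not_adj (hS : IsCompleteBipartiteSet H S) (hu : u ∈ S) (hv : v ∈ S)
    (hw : w ∈ S) (huv : H.Adj u v) (huw : ¬H.Adj u w) : H.Adj v w :=
  not_not.1 fun hvw => huw ((hS.adj_iff_not_adj hu hv hw huv).2 hvw)

lemma adj_of_adj_of_adj_of_adj (hS : IsCompleteBipartiteSet H S) (hu : u ∈ S) (hv : v ∈ S)
    (hw : w ∈ S) (hz : z ∈ S) (huv : H.Adj u v) (hvw : H.Adj v w) (hwz : H.Adj w z) :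
    H.Adj u z := by
  have hwu : ¬H.Adj w u := fun h => hS.not_adj_of_adj_of_adj hu hv hw huv hvw h.symm
  exact ((hS.adj_iff_not_adj hz hw hu hwz.symm).2 hwu).symm

lemma of_adj (h : H.Adj u v) : IsCompleteBipartiteSet H {u, v} := by
  refine ⟨{u}, {v}, ⟨Set.singleton_nonempty u, Set.singleton_nonempty v, ?_, ?_, ?_, ?_⟩, rfl⟩
  all_goals simp [h.ne, h]

lemma of_adj_of_adj_of_not_adj (huv : H.Adj u v) (huw : H.Adj u w) (hvw : ¬H.Adj v w) :
    IsCompleteBipartiteSet H {u, v, w} := by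
  refine ⟨{u}, {v, w}, ⟨Set.singleton_nonempty u, ⟨v, by simp⟩, ?_, ?_, ?_, ?_⟩, rfl⟩
  all_goals simp [huv.ne, huw.ne, huv, huw, hvw, H.adj_comm w v]

lemma exists_isBiclique_superset [Finite V] (hS : IsCompleteBipartiteSet H S) :
    ∃ T, IsBiclique H T ∧ S ⊆ T := by
  obtain ⟨T, hST, hT⟩ := Finite.exists_le_maximal (p := IsCompleteBipartiteSet H) hS
  exact ⟨T, ⟨hT.prop, fun T' hT' hTT' => le_antisymm hTT' (hT.le_of_ge hT' hTT')⟩, hST⟩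

end IsCompleteBipartiteSet

open Set

lemma Set.InjOn.exists_mem_ne_ne {α β : Type*} {f : α → β} {s : Set α} (hf : InjOn f s)
    (hs : 2 < s.ncard) (b₁ b₂ : β) : ∃ a ∈ s, f a ≠ b₁ ∧ f a ≠ b₂ := by
  by_contra! h
  have himage : f '' s ⊆ {b₁, b₂} := by
    rintro _ ⟨a, ha, rfl⟩
    by_cases hb : f a = b₁
    · exact Or.inl hb
    · exact Or.inr (h a ha hb)
  have := (ncard_le_ncard himage).trans (ncard_insert_le b₁ {b₂})
  rw [hf.ncard_image, ncard_singleton] at this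
  omega

def adjTrace (H : SimpleGraph V) (x y v : V) : Prop × Prop := (H.Adj x v, H.Adj y v)

section Traces

variable {s : Set V} {x y : V}

lemma exists_adj_of_injOn_adjTrace (h : InjOn (adjTrace H x y) s) (hs : 2 < s.ncard) :
    (∃ a ∈ s, H.Adj x a) ∧ ∃ a ∈ s, H.Adj y a := by
  obtain ⟨a, ha, ha₁, ha₂⟩ := h.exists_mem_ne_ne hs (False, False) (False, True)
  obtain ⟨c, hc, hc₁, hc₂⟩ := h.exists_mem_ne_ne hs (False, False) (True, False)
  simp only [adjTrace, ne_eq, Prod.mk.injEq, eq_iff_iff, iff_false, iff_true] at ha₁ ha₂ hc₁ hc₂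
  exact ⟨⟨a, ha, by tauto⟩, c, hc, by tauto⟩

lemma exists_adj_adj_of_injOn_adjTrace (h : InjOn (adjTrace H x y) s) (hs : 2 < s.ncard) :
    ∃ a ∈ s, ∃ c ∈ s, H.Adj x a ∧ H.Adj y c ∧ (¬H.Adj y a ∨ ¬H.Adj x c) := by
  obtain ⟨⟨a, ha, hxa⟩, c, hc, hyc⟩ := exists_adj_of_injOn_adjTrace h hs
  obtain ⟨e, he, he₁, he₂⟩ := h.exists_mem_ne_ne hs (False, False) (True, True)
  simp only [adjTrace, ne_eq, Prod.mk.injEq, eq_iff_iff, iff_false, iff_true] at he₁ he₂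
  by_cases hxe : H.Adj x e
  · exact ⟨e, he, c, hc, hxe, hyc, Or.inl fun hye => he₂ ⟨hxe, hye⟩⟩
  · exact ⟨a, ha, e, he, hxa, by tauto, Or.inr hxe⟩

lemma exists_not_adj_not_adj_of_injOn_adjTrace (h : InjOn (adjTrace H x y) s) (hs : 2 < s.ncard)
    (hno : ∀ a ∈ s, H.Adj x a → ¬H.Adj y a) : ∃ a ∈ s, ¬H.Adj x a ∧ ¬H.Adj y a := by
  obtain ⟨a, ha, ha₁, ha₂⟩ := h.exists_mem_ne_ne hs (True, False) (False, True)
  simp only [adjTrace, ne_eq, Prod.mk.injEq, eq_iff_iff, iff_false, iff_true] at ha₁ ha₂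
  exact ⟨a, ha, by have := hno a ha; tauto⟩

/-- Vertices on one side of a complete bipartite set have the same neighbours inside it, so in a
false-twin-free graph they are told apart by the two vertices outside. -/
lemma injOn_adjTrace (htwin : ∀ v w : V, v ≠ w → H.neighborSet v ≠ H.neighborSet w)
    {B₁ B₂ : Set V} (hB : IsCBP H B₁ B₂) (hcover : (B₁ ∪ B₂)ᶜ ⊆ {x, y}) :
    InjOn (adjTrace H x y) B₁ := by
  obtain ⟨-, -, -, hi₁, -, hc⟩ := hB
  intro a ha b hb hab
  obtain ⟨hxab, hyab⟩ := Prod.ext_iff.1 hab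
  by_contra hne
  refine htwin a b hne (Set.ext fun v => ?_)
  simp only [mem_neighborSet]
  by_cases hv : v ∈ B₁ ∪ B₂
  · rcases hv with hv | hv
    · exact iff_of_false (hi₁ a ha v hv) (hi₁ b hb v hv)
    · exact iff_of_true (hc a ha v hv) (hc b hb v hv)
  · rcases hcover hv with rfl | rfl
    · rw [H.adj_comm a, H.adj_comm b]; exact Iff.of_eq hxab
    · rw [H.adj_comm a, H.adj_comm b]; exact Iff.of_eq hyab

end Traces

def Incompatible (H : SimpleGraph V) (T T' : Set V) : Prop :=
  ∀ S, IsCompleteBipartiteSet H S → T ⊆ S → T' ⊆ S → False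

def IsCrossingSet (H : SimpleGraph V) (B T : Set V) : Prop :=
  IsCompleteBipartiteSet H T ∧ ¬T ⊆ B ∧ (T ∩ B).Nonempty

lemma IsCrossingSet.pair {B : Set V} {u v : V} (huv : H.Adj u v) (hu : u ∉ B) (hv : v ∈ B) :
    IsCrossingSet H B {u, v} :=
  ⟨.of_adj huv, fun h => hu (h (by simp)), v, by simp, hv⟩

lemma IsCrossingSet.triple {B : Set V} {u v w : V} (huv : H.Adj u v) (huw : H.Adj u w)
    (hvw : ¬H.Adj v w) (hu : u ∈ B) (hv : v ∉ B) : IsCrossingSet H B {u, v, w} :=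
  ⟨.of_adj_of_adj_of_not_adj huv huw hvw, fun h => hv (h (by simp)), u, by simp, hu⟩

/-- The neighbours of `B` in `KB H` when `B` is a biclique. -/
def meetingBicliques (H : SimpleGraph V) (B : Set V) : Set (Set V) :=
  {S | IsBiclique H S ∧ S ≠ B ∧ (S ∩ B).Nonempty}

lemma four_le_ncard_meetingBicliques_of_incompatible [Finite V] {B T₁ T₂ T₃ T₄ : Set V}
    (h₁ : IsCrossingSet H B T₁) (h₂ : IsCrossingSet H B T₂) (h₃ : IsCrossingSet H B T₃)
    (h₄ : IsCrossingSet H B T₄) (h₁₂ : Incompatible H T₁ T₂) (h₁₃ : Incompatible H T₁ T₃)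
    (h₁₄ : Incompatible H T₁ T₄) (h₂₃ : Incompatible H T₂ T₃) (h₂₄ : Incompatible H T₂ T₄)
    (h₃₄ : Incompatible H T₃ T₄) : 4 ≤ (meetingBicliques H B).ncard := by
  classical
  have hext : ∀ T, IsCrossingSet H B T → ∃ S ∈ meetingBicliques H B, T ⊆ S := by
    rintro T ⟨hT, hTB, hTmeet⟩
    obtain ⟨S, hS, hTS⟩ := hT.exists_isBiclique_superset
    exact ⟨S, ⟨hS, fun h => hTB (h ▸ hTS), hTmeet.mono (inter_subset_inter_left B hTS)⟩, hTS⟩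
  obtain ⟨S₁, hS₁, hT₁⟩ := hext T₁ h₁
  obtain ⟨S₂, hS₂, hT₂⟩ := hext T₂ h₂
  obtain ⟨S₃, hS₃, hT₃⟩ := hext T₃ h₃
  obtain ⟨S₄, hS₄, hT₄⟩ := hext T₄ h₄
  have hne : ∀ {T T' S S'}, Incompatible H T T' → S ∈ meetingBicliques H B → T ⊆ S → T' ⊆ S' →
      S ≠ S' := fun hinc hS hT hT' h => hinc _ hS.1.1 hT (h ▸ hT')
  have hnodup : [S₁, S₂, S₃, S₄].Nodup := by
    simp only [List.nodup_cons, List.mem_cons, List.not_mem_nil, or_false, not_or,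
      not_false_eq_true, List.nodup_nil, and_true]
    exact ⟨⟨hne h₁₂ hS₁ hT₁ hT₂, hne h₁₃ hS₁ hT₁ hT₃, hne h₁₄ hS₁ hT₁ hT₄⟩,
      ⟨hne h₂₃ hS₂ hT₂ hT₃, hne h₂₄ hS₂ hT₂ hT₄⟩, hne h₃₄ hS₃ hT₃ hT₄⟩
  calc 4 = ([S₁, S₂, S₃, S₄].toFinset : Set (Set V)).ncard := by
        rw [ncard_coe_finset, List.toFinset_card_of_nodup hnodup]; rfl
    _ ≤ _ := ncard_le_ncard (by simp [insert_subset_iff, hS₁, hS₂, hS₃, hS₄])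

section Cases

variable [Finite V] {B₁ B₂ : Set V} {x y : V}

lemma four_le_ncard_meetingBicliques_of_not_adj (hB : IsCBP H B₁ B₂) (hx : x ∉ B₁ ∪ B₂)
    (hy : y ∉ B₁ ∪ B₂) (htr₁ : InjOn (adjTrace H x y) B₁)
    (htr₂ : InjOn (adjTrace H x y) B₂) (h₁ : 2 < B₁.ncard) (h₂ : 2 < B₂.ncard) (hxy : ¬H.Adj x y) :
    4 ≤ (meetingBicliques H (B₁ ∪ B₂)).ncard := by
  obtain ⟨a, ha, c, hc, hxa, hyc, hac⟩ := exists_adj_adj_of_injOn_adjTrace htr₁ h₁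
  obtain ⟨b, hb, d, hd, hxb, hyd, hbd⟩ := exists_adj_adj_of_injOn_adjTrace htr₂ h₂
  obtain ⟨-, -, -, -, -, hcross⟩ := hB
  have hyx : ¬H.Adj y x := fun h => hxy h.symm
  refine four_le_ncard_meetingBicliques_of_incompatible
    (.pair hxa hx (.inl ha)) (.pair hxb hx (.inr hb)) (.pair hyc hy (.inl hc))
    (.pair hyd hy (.inr hd)) ?_ ?_ ?_ ?_ ?_ ?_
  · exact fun S hS h h' => hS.not_adj_of_adj_of_adj (h (by simp)) (h (by simp)) (h' (by simp))
      hxa (hcross a ha b hb) hxb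
  · intro S hS h h'
    have hay := hS.adj_of_adj_of_not_adj (h (by simp)) (h (by simp)) (h' (by simp)) hxa hxy
    have hcx := hS.adj_of_adj_of_not_adj (h' (by simp)) (h' (by simp)) (h (by simp)) hyc hyx
    exact hac.elim (· hay.symm) (· hcx.symm)
  · exact fun S hS h h' => hxy (hS.adj_of_adj_of_adj_of_adj (h (by simp)) (h (by simp))
      (h' (by simp)) (h' (by simp)) hxa (hcross a ha d hd) hyd.symm)
  · exact fun S hS h h' => hxy (hS.adj_of_adj_of_adj_of_adj (h (by simp)) (h (by simp))
      (h' (by simp)) (h' (by simp)) hxb (hcross c hc b hb).symm hyc.symm)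
  · intro S hS h h'
    have hby := hS.adj_of_adj_of_not_adj (h (by simp)) (h (by simp)) (h' (by simp)) hxb hxy
    have hdx := hS.adj_of_adj_of_not_adj (h' (by simp)) (h' (by simp)) (h (by simp)) hyd hyx
    exact hbd.elim (· hby.symm) (· hdx.symm)
  · exact fun S hS h h' => hS.not_adj_of_adj_of_adj (h (by simp)) (h (by simp)) (h' (by simp))
      hyc (hcross c hc d hd) hyd

lemma four_le_ncard_meetingBicliques_of_common_adj (hB : IsCBP H B₁ B₂) (hx : x ∉ B₁ ∪ B₂)
    (hy : y ∉ B₁ ∪ B₂) (htr₂ : InjOn (adjTrace H x y) B₂) (h₂ : 2 < B₂.ncard) (hxy : H.Adj x y)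
    {a : V} (ha : a ∈ B₁) (hxa : H.Adj x a) (hya : H.Adj y a) :
    4 ≤ (meetingBicliques H (B₁ ∪ B₂)).ncard := by
  obtain ⟨⟨b, hb, hxb⟩, d, hd, hyd⟩ := exists_adj_of_injOn_adjTrace htr₂ h₂
  obtain ⟨-, -, -, -, hi₂, hcross⟩ := hB
  have hxya : ∀ S, IsCompleteBipartiteSet H S → x ∈ S → y ∈ S → a ∈ S → False :=
    fun S hS hxS hyS haS => hS.not_adj_of_adj_of_adj hxS hyS haS hxy hya hxa
  refine four_le_ncard_meetingBicliques_of_incompatible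
    (.pair hxa hx (.inl ha)) (.pair hya hy (.inl ha)) (.pair hxb hx (.inr hb))
    (.pair hyd hy (.inr hd)) ?_ ?_ ?_ ?_ ?_ ?_
  · exact fun S hS h h' => hxya S hS (h (by simp)) (h' (by simp)) (h (by simp))
  · exact fun S hS h h' => hS.not_adj_of_adj_of_adj (h (by simp)) (h (by simp)) (h' (by simp))
      hxa (hcross a ha b hb) hxb
  · exact fun S hS h h' => hxya S hS (h (by simp)) (h' (by simp)) (h (by simp))
  · exact fun S hS h h' => hxya S hS (h' (by simp)) (h (by simp)) (h (by simp))
  · exact fun S hS h h' => hS.not_adj_of_adj_of_adj (h (by simp)) (h (by simp)) (h' (by simp))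
      hya (hcross a ha d hd) hyd
  · exact fun S hS h h' => hi₂ b hb d hd (hS.adj_of_adj_of_adj_of_adj (h (by simp))
      (h (by simp)) (h' (by simp)) (h' (by simp)) hxb.symm hxy hyd)

lemma four_le_ncard_meetingBicliques_of_no_common_adj (hB : IsCBP H B₁ B₂) (hx : x ∉ B₁ ∪ B₂)
    (hy : y ∉ B₁ ∪ B₂) (htr₁ : InjOn (adjTrace H x y) B₁) (htr₂ : InjOn (adjTrace H x y) B₂)
    (h₁ : 2 < B₁.ncard) (h₂ : 2 < B₂.ncard) (hxy : H.Adj x y)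
    (hno₁ : ∀ a ∈ B₁, H.Adj x a → ¬H.Adj y a)
    (hno₂ : ∀ b ∈ B₂, H.Adj x b → ¬H.Adj y b) :
    4 ≤ (meetingBicliques H (B₁ ∪ B₂)).ncard := by
  obtain ⟨⟨a₁, ha₁, hxa₁⟩, a₂, ha₂, hya₂⟩ := exists_adj_of_injOn_adjTrace htr₁ h₁
  obtain ⟨⟨b₁, hb₁, hxb₁⟩, b₂, hb₂, hyb₂⟩ := exists_adj_of_injOn_adjTrace htr₂ h₂
  obtain ⟨a₀, ha₀, hxa₀, hya₀⟩ := exists_not_adj_not_adj_of_injOn_adjTrace htr₁ h₁ hno₁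
  obtain ⟨b₀, hb₀, hxb₀, hyb₀⟩ := exists_not_adj_not_adj_of_injOn_adjTrace htr₂ h₂ hno₂
  obtain ⟨-, -, -, hi₁, hi₂, hcross⟩ := hB
  -- The edges `x a₁` and `y b₂` may lie in a common `C₄`, hence paths of length two.
  refine four_le_ncard_meetingBicliques_of_incompatible
    (.triple hxa₁.symm (hcross a₁ ha₁ b₀ hb₀) hxb₀ (.inl ha₁) hx)
    (.triple hxb₁.symm (hcross a₀ ha₀ b₁ hb₁).symm hxa₀ (.inr hb₁) hx)
    (.triple hya₂.symm (hcross a₂ ha₂ b₀ hb₀) hyb₀ (.inl ha₂) hy)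
    (.triple hyb₂.symm (hcross a₀ ha₀ b₂ hb₂).symm hya₀ (.inr hb₂) hy) ?_ ?_ ?_ ?_ ?_ ?_
  · exact fun S hS h h' => hS.not_adj_of_adj_of_adj (h (by simp)) (h (by simp)) (h' (by simp))
      hxa₁ (hcross a₁ ha₁ b₁ hb₁) hxb₁
  · exact fun S hS h h' => hi₁ a₂ ha₂ a₁ ha₁ (hS.adj_of_adj_of_adj_of_adj (h' (by simp))
      (h' (by simp)) (h (by simp)) (h (by simp)) hya₂.symm hxy.symm hxa₁)
  · exact fun S hS h h' => hxa₀ (hS.adj_of_adj_of_adj_of_adj (h' (by simp))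
      (h' (by simp)) (h' (by simp)) (h (by simp)) (hcross a₀ ha₀ b₂ hb₂) hyb₂.symm hxy.symm).symm
  · exact fun S hS h h' => hxb₀ (hS.adj_of_adj_of_adj_of_adj (h' (by simp))
      (h' (by simp)) (h' (by simp)) (h (by simp)) (hcross a₂ ha₂ b₀ hb₀).symm hya₂.symm
      hxy.symm).symm
  · exact fun S hS h h' => hi₂ b₁ hb₁ b₂ hb₂ (hS.adj_of_adj_of_adj_of_adj (h (by simp))
      (h (by simp)) (h' (by simp)) (h' (by simp)) hxb₁.symm hxy hyb₂)
  · exact fun S hS h h' => hS.not_adj_of_adj_of_adj (h (by simp)) (h (by simp)) (h' (by simp))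
      hya₂ (hcross a₂ ha₂ b₂ hb₂) hyb₂

end Cases

theorem stmt_9_general {V : Type} [Fintype V] (H : SimpleGraph V)
    (htwinfree : ∀ v w : V, v ≠ w → H.neighborSet v ≠ H.neighborSet w)
    (hcard : Fintype.card V = 8)
    (B B1 B2 : Set V)
    (hpart : IsCBP H B1 B2) (hunion : B1 ∪ B2 = B)
    (h1 : B1.ncard = 3) (h2 : B2.ncard = 3) :
    4 ≤ {S : Set V | IsBiclique H S ∧ S ≠ B ∧ (S ∩ B).Nonempty}.ncard := by
  subst hunion
  have hcompl : (B1 ∪ B2)ᶜ.ncard = 2 := by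
    have := ncard_add_ncard_compl (B1 ∪ B2)
    rw [ncard_union_eq hpart.2.2.1, h1, h2, Nat.card_eq_fintype_card, hcard] at this
    omega
  obtain ⟨x, y, -, hxy⟩ := ncard_eq_two.1 hcompl
  have hx : x ∈ (B1 ∪ B2)ᶜ := hxy ▸ mem_insert x {y}
  have hy : y ∈ (B1 ∪ B2)ᶜ := hxy ▸ mem_insert_of_mem x rfl
  have htr₁ := injOn_adjTrace htwinfree hpart hxy.subset
  have htr₂ := injOn_adjTrace htwinfree hpart.symm (union_comm B1 B2 ▸ hxy.subset)
  replace h1 : 2 < B1.ncard := by omega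
  replace h2 : 2 < B2.ncard := by omega
  by_cases hadj : H.Adj x y
  · by_cases hA : ∃ a ∈ B1, H.Adj x a ∧ H.Adj y a
    · obtain ⟨a, ha, hxa, hya⟩ := hA
      exact four_le_ncard_meetingBicliques_of_common_adj hpart hx hy htr₂ h2 hadj ha hxa hya
    by_cases hB : ∃ b ∈ B2, H.Adj x b ∧ H.Adj y b
    · obtain ⟨b, hb, hxb, hyb⟩ := hB
      rw [union_comm] at hx hy ⊢
      exact
        four_le_ncard_meetingBicliques_of_common_adj hpart.symm hx hy htr₁ h1 hadj hb hxb hyb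
    push Not at hA hB
    exact four_le_ncard_meetingBicliques_of_no_common_adj hpart hx hy htr₁ htr₂ h1 h2 hadj hA hB
  · exact four_le_ncard_meetingBicliques_of_not_adj hpart hx hy htr₁ htr₂ h1 h2 hadj

/-- In a connected false-twin-free graph on exactly 8 vertices, a `K_{3,3}` biclique
meets at least 4 other bicliques. -/
theorem stmt_9 {V : Type} [Fintype V] (H : SimpleGraph V) (hconn : H.Connected)
    (htwinfree : ∀ v w : V, v ≠ w → H.neighborSet v ≠ H.neighborSet w)
    (hcard : Fintype.card V = 8)
    (B B1 B2 : Set V) (hB : IsBiclique H B)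
    (hpart : IsCBP H B1 B2) (hunion : B1 ∪ B2 = B)
    (h1 : B1.ncard = 3) (h2 : B2.ncard = 3) :
    4 ≤ {S : Set V | IsBiclique H S ∧ S ≠ B ∧ (S ∩ B).Nonempty}.ncard :=
  stmt_9_general H htwinfree hcard B B1 B2 hpart hunion h1 h2
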